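/- Let m1 and m2 be odd positive integers. If there exist a PDM(3, m1), a PDM(3, 2m1+1), and an SIPDM(3, m2, 1), then there exists a PDM(3, m) with m = m1(m2+1) + 1. Moreover, if in addition there exists an SIPDM(3, 2m1+1, 1), then there exists an SIPDM(3, m, 1). -/

import Mathlib

/-- For odd `m = 2r+1`, the set `I_m = {-r, …, r}`. -/
noncomputable def Iset (m : ℕ) : Finset ℤ := Finset.Icc (-(((m : ℤ) - 1) / 2)) (((m : ℤ) - 1) / 2)

/-- `f` comprises all elements of `S` exactly once (entries from `S`,
each element of `S` appearing exactly once). -/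
def rowPerfect {ι : Type*} (S : Finset ℤ) (f : ι → ℤ) : Prop :=
  (∀ j, f j ∈ S) ∧ ∀ z ∈ S, ∃! j, f j = z

/-- `D` is a perfect difference matrix based on the set `S`: every row
comprises all elements of `S` exactly once, and the componentwise differences
of any two distinct rows comprise all elements of `S` exactly once. -/
def IsPDMOn {n : ℕ} {ι : Type*} (S : Finset ℤ) (D : Fin n → ι → ℤ) : Prop :=
  (∀ i, rowPerfect S (D i)) ∧
  ∀ s t : Fin n, s < t → rowPerfect S (fun j => D t j - D s j)

/-- There exists a `PDM(n,m)`. -/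
def PDMexists (n m : ℕ) : Prop := ∃ D : Fin n → Fin m → ℤ, IsPDMOn (Iset m) D

/-- There exists an `SIPDM(n,m,1)` (standard incomplete PDM with hole `{0}`). -/
def SIPDMexists (n m : ℕ) : Prop :=
  ∃ D : Fin n → Fin (m - 1) → ℤ, IsPDMOn (Iset m \ {0}) D

/-- Directed list of differences of a block, as a multiset. -/
def deltaB (B : Finset ℤ) : Multiset ℤ :=
  ((B ×ˢ B).filter (fun p => p.2 < p.1)).val.map (fun p => p.1 - p.2)

/-- Directed list of differences of a family of blocks. -/
def deltaFam {t : ℕ} (B : Fin t → Finset ℤ) : Multiset ℤ :=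
  (Finset.univ.val : Multiset (Fin t)).bind (fun i => deltaB (B i))

/-- A `(v,4,1)`-PDP with `t` blocks covering `H ⊆ [1,(v-1)/2]`: the directed
differences of the blocks cover each element of `H` exactly once and nothing else. -/
def IsPDP4 (v t : ℕ) (B : Fin t → Finset ℤ) (H : Finset ℤ) : Prop :=
  (∀ i, (B i).card = 4) ∧ H ⊆ Finset.Icc 1 (((v : ℤ) - 1) / 2) ∧ deltaFam B = H.val

/-!
Write `m1 = 2R + 1` and `m2 = 2T + 1`, so that `I_m = [-(2R+1)(T+1), (2R+1)(T+1)]`. The multiples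
of `T + 1` in `I_m` are `(T + 1) • I_(2m1+1)`, and every other element of `I_m` is uniquely
`2(T + 1)d + a` with `d ∈ I_m1` and `a ∈ I_m2 \ {0}` (balanced division by `2(T + 1)`). A row of
the new matrix is therefore assembled from a row of a `PDM(m1)`, of an `SIPDM(m2, 1)` and of a
(standard incomplete) `PDM(2m1 + 1)`; the assembly is additive, so differences of rows are
assembled from differences of rows in the same way.
-/

open Finset

section rowPerfect

variable {ι ι' κ : Type*} {S S' V : Finset ℤ} {f : ι → ℤ} {g : κ → ℤ}

theorem rowPerfect_iff_bijOn : rowPerfect S f ↔ Set.BijOn f Set.univ S := by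
  constructor
  · rintro ⟨hmaps, huniq⟩
    refine ⟨fun j _ => hmaps j, fun i _ j _ hij => ?_, fun z hz => ?_⟩
    · obtain ⟨k, -, hk⟩ := huniq (f j) (hmaps j)
      exact (hk i hij).trans (hk j rfl).symm
    · obtain ⟨j, hj, -⟩ := huniq z hz
      exact ⟨j, trivial, hj⟩
  · rintro ⟨hmaps, hinj, hsurj⟩
    refine ⟨fun j => hmaps trivial, fun z hz => ?_⟩
    obtain ⟨j, -, hj⟩ := hsurj hz
    exact ⟨j, hj, fun i hi => hinj trivial trivial (hi.trans hj.symm)⟩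

theorem rowPerfect.comp_equiv (hf : rowPerfect S f) (e : ι' ≃ ι) : rowPerfect S (f ∘ e) :=
  rowPerfect_iff_bijOn.2 <| (rowPerfect_iff_bijOn.1 hf).comp (Set.bijOn_univ.2 e.bijective)

theorem rowPerfect.map {φ : ℤ → ℤ} (hf : rowPerfect S f) (hφ : Set.BijOn φ S V) :
    rowPerfect V (φ ∘ f) :=
  rowPerfect_iff_bijOn.2 <| hφ.comp (rowPerfect_iff_bijOn.1 hf)

theorem rowPerfect.map₂ {φ : ℤ × ℤ → ℤ} (hf : rowPerfect S f) (hg : rowPerfect S' g)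
    (hφ : Set.BijOn φ (S ×ˢ S' : Set (ℤ × ℤ)) V) :
    rowPerfect V (fun p : ι × κ => φ (f p.1, g p.2)) := by
  have hfg := (rowPerfect_iff_bijOn.1 hf).prodMap (rowPerfect_iff_bijOn.1 hg)
  rw [Set.univ_prod_univ] at hfg
  exact rowPerfect_iff_bijOn.2 (hφ.comp hfg)

theorem rowPerfect.sumElim (hf : rowPerfect S f) (hg : rowPerfect S' g) (hd : Disjoint S S') :
    rowPerfect (S ∪ S') (Sum.elim f g) := by
  refine ⟨Sum.rec (fun i => mem_union_left _ (hf.1 i)) (fun j => mem_union_right _ (hg.1 j)),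
    fun z hz => ?_⟩
  rcases mem_union.1 hz with hz | hz
  · obtain ⟨i, hi, hu⟩ := hf.2 z hz
    refine ⟨.inl i, hi, Sum.rec (fun i' h => congrArg _ (hu i' h)) (fun j h => ?_)⟩
    exact (disjoint_left.1 hd hz (h ▸ hg.1 j)).elim
  · obtain ⟨j, hj, hu⟩ := hg.2 z hz
    refine ⟨.inr j, hj, Sum.rec (fun i h => ?_) (fun j' h => congrArg _ (hu j' h))⟩
    exact (disjoint_left.1 hd (h ▸ hf.1 i) hz).elim

end rowPerfect

theorem bijOn_mul_Icc_sdiff {K N : ℤ} (hK : 0 < K) {U : Finset ℤ} (hU : U ⊆ {0}) :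
    Set.BijOn (K * ·) (Icc (-N) N \ U : Finset ℤ)
      ((Icc (-(N * K)) (N * K)).filter (K ∣ ·) \ U : Finset ℤ) := by
  have hmemU : ∀ e, K * e ∈ U ↔ e ∈ U := fun e => by
    by_cases he : e = 0
    · simp [he]
    · exact iff_of_false (fun h => mul_ne_zero hK.ne' he (mem_singleton.1 (hU h)))
        (fun h => he (mem_singleton.1 (hU h)))
  refine ⟨fun e he => ?_, fun e _ e' _ h => mul_left_cancel₀ hK.ne' h, fun z hz => ?_⟩
  · simp only [mem_coe, mem_sdiff, mem_filter, mem_Icc, hmemU] at he ⊢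
    exact ⟨⟨⟨by nlinarith, by nlinarith⟩, dvd_mul_right K e⟩, he.2⟩
  · simp only [mem_coe, mem_sdiff, mem_filter, mem_Icc] at hz
    obtain ⟨⟨⟨hlo, hhi⟩, e, rfl⟩, hzU⟩ := hz
    rw [hmemU] at hzU
    refine ⟨e, ?_, rfl⟩
    simp only [mem_coe, mem_sdiff, mem_Icc]
    exact ⟨⟨by nlinarith, by nlinarith⟩, hzU⟩

theorem bijOn_balanced_divMod {T R : ℤ} (hT : 0 ≤ T) :
    Set.BijOn (fun p : ℤ × ℤ => 2 * (T + 1) * p.2 + p.1)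
      ((Icc (-T) T \ {0} : Finset ℤ) ×ˢ (Icc (-R) R : Finset ℤ) : Set (ℤ × ℤ))
      ((Icc (-((2 * R + 1) * (T + 1))) ((2 * R + 1) * (T + 1))).filter
        (¬ (T + 1) ∣ ·) : Finset ℤ) := by
  refine ⟨fun p hp => ?_, fun p hp q hq hpq => ?_, fun z hz => ?_⟩
  · obtain ⟨a, d⟩ := p
    simp only [Set.mem_prod, mem_coe, mem_sdiff, mem_Icc, mem_singleton] at hp
    obtain ⟨⟨⟨ha1, ha2⟩, ha0⟩, hd1, hd2⟩ := hp
    simp only [mem_coe, mem_filter, mem_Icc]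
    refine ⟨⟨by nlinarith, by nlinarith⟩, fun hdvd => ha0 ?_⟩
    have ha : (T + 1) ∣ a := (dvd_add_right ((dvd_mul_left (T + 1) 2).mul_right d)).1 hdvd
    exact Int.eq_zero_of_abs_lt_dvd ha (abs_lt.2 ⟨by omega, by omega⟩)
  · obtain ⟨a, d⟩ := p
    obtain ⟨a', d'⟩ := q
    simp only [Set.mem_prod, mem_coe, mem_sdiff, mem_Icc, mem_singleton] at hp hq hpq
    have ha : a - a' = 0 := Int.eq_zero_of_abs_lt_dvd (m := 2 * (T + 1))
      ⟨d' - d, by linear_combination hpq⟩ (abs_lt.2 ⟨by omega, by omega⟩)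
    have hd : d = d' := by nlinarith
    rw [sub_eq_zero.1 ha, hd]
  · simp only [mem_coe, mem_filter, mem_Icc] at hz
    obtain ⟨⟨hlo, hhi⟩, hndvd⟩ := hz
    have hK : 0 < 2 * (T + 1) := by omega
    -- `r - (T + 1)` with `r` the remainder of `z + (T + 1)` is the balanced remainder of `z`
    have hdiv := Int.emod_add_mul_ediv (z + (T + 1)) (2 * (T + 1))
    have hr0 := Int.emod_nonneg (z + (T + 1)) hK.ne'
    have hr1 := Int.emod_lt_of_pos (z + (T + 1)) hK
    generalize (z + (T + 1)) / (2 * (T + 1)) = d at hdiv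
    generalize (z + (T + 1)) % (2 * (T + 1)) = r at hdiv hr0 hr1
    have hr0' : r ≠ 0 := fun h => hndvd ⟨2 * d - 1, by linear_combination h - hdiv⟩
    have hr1' : r ≠ T + 1 := fun h => hndvd ⟨2 * d, by linear_combination h - hdiv⟩
    have hrpos : 0 < r := lt_of_le_of_ne hr0 (Ne.symm hr0')
    refine ⟨(r - (T + 1), d), ?_, by linear_combination hdiv⟩
    simp only [Set.mem_prod, mem_coe, mem_sdiff, mem_Icc, mem_singleton]
    refine ⟨⟨⟨by omega, by omega⟩, by omega⟩, ?_, ?_⟩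
    · have := lt_of_mul_lt_mul_left (a := 2 * (T + 1)) (b := -R - 1) (by linarith) hK.le
      omega
    · have := lt_of_mul_lt_mul_left (b := d) (c := R + 1) (by linarith) hK.le
      omega

def inflateRow {ι₁ ι₂ ι₃ : Type*} (T : ℤ) (f : ι₁ → ℤ) (g : ι₂ → ℤ) (h : ι₃ → ℤ) :
    ι₁ × ι₂ ⊕ ι₃ → ℤ :=
  Sum.elim (fun p => 2 * (T + 1) * g p.2 + f p.1) (fun l => (T + 1) * h l)

section inflate

variable {ι₁ ι₂ ι₃ : Type*} {T R : ℤ} {U : Finset ℤ}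

theorem inflateRow_sub (f f' : ι₁ → ℤ) (g g' : ι₂ → ℤ) (h h' : ι₃ → ℤ) :
    (fun j => inflateRow T f g h j - inflateRow T f' g' h' j) =
      inflateRow T (fun j => f j - f' j) (fun j => g j - g' j) (fun j => h j - h' j) := by
  funext j
  rcases j with p | l <;> simp only [inflateRow, Sum.elim_inl, Sum.elim_inr] <;> ring

theorem rowPerfect_inflateRow (hT : 0 ≤ T) (hU : U ⊆ {0}) {f : ι₁ → ℤ} {g : ι₂ → ℤ}
    {h : ι₃ → ℤ} (hf : rowPerfect (Icc (-T) T \ {0}) f) (hg : rowPerfect (Icc (-R) R) g)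
    (hh : rowPerfect (Icc (-(2 * R + 1)) (2 * R + 1) \ U) h) :
    rowPerfect (Icc (-((2 * R + 1) * (T + 1))) ((2 * R + 1) * (T + 1)) \ U)
      (inflateRow T f g h) := by
  set I := Icc (-((2 * R + 1) * (T + 1))) ((2 * R + 1) * (T + 1))
  have hmain := hf.map₂ hg (bijOn_balanced_divMod (R := R) hT)
  have hhole := hh.map (bijOn_mul_Icc_sdiff (by omega : 0 < T + 1) hU)
  have hdisj : Disjoint (I.filter (¬ (T + 1) ∣ ·)) (I.filter ((T + 1) ∣ ·) \ U) :=
    (disjoint_filter_filter_not I I _).symm.mono_right sdiff_subset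
  have hunion : I.filter (¬ (T + 1) ∣ ·) ∪ (I.filter ((T + 1) ∣ ·) \ U) = I \ U := by
    have hU0 : ∀ z ∈ U, (T + 1) ∣ z := fun z hz => mem_singleton.1 (hU hz) ▸ dvd_zero _
    ext z
    simp only [mem_union, mem_filter, mem_sdiff]
    grind
  rw [← hunion]
  exact hmain.sumElim hhole hdisj

theorem IsPDMOn.inflate {n : ℕ} (hT : 0 ≤ T) (hU : U ⊆ {0}) {A : Fin n → ι₁ → ℤ}
    {G : Fin n → ι₂ → ℤ} {E : Fin n → ι₃ → ℤ} (hA : IsPDMOn (Icc (-T) T \ {0}) A)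
    (hG : IsPDMOn (Icc (-R) R) G) (hE : IsPDMOn (Icc (-(2 * R + 1)) (2 * R + 1) \ U) E) :
    IsPDMOn (Icc (-((2 * R + 1) * (T + 1))) ((2 * R + 1) * (T + 1)) \ U)
      (fun i => inflateRow T (A i) (G i) (E i)) :=
  ⟨fun i => rowPerfect_inflateRow hT hU (hA.1 i) (hG.1 i) (hE.1 i), fun s t hst => by
    simpa only [inflateRow_sub] using
      rowPerfect_inflateRow hT hU (hA.2 s t hst) (hG.2 s t hst) (hE.2 s t hst)⟩

end inflate

theorem IsPDMOn.comp_equiv {n : ℕ} {ι ι' : Type*} {S : Finset ℤ} {D : Fin n → ι → ℤ}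
    (hD : IsPDMOn S D) (e : ι' ≃ ι) : IsPDMOn S (fun i => D i ∘ e) :=
  ⟨fun i => (hD.1 i).comp_equiv e, fun s t hst => (hD.2 s t hst).comp_equiv e⟩

theorem Iset_two_mul_add_one (n : ℕ) : Iset (2 * n + 1) = Icc (-(n : ℤ)) n := by
  have h : (((2 * n + 1 : ℕ) : ℤ) - 1) / 2 = n := by omega
  rw [Iset, h]

theorem exists_IsPDMOn_Iset_inflate {n k r t : ℕ} {U : Finset ℤ} (hU : U ⊆ {0}) {ι : Type*}
    [Fintype ι] (hk : 2 * t * (2 * r + 1) + Fintype.card ι = k) (hG : PDMexists n (2 * r + 1))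
    (hA : SIPDMexists n (2 * t + 1))
    (hE : ∃ E : Fin n → ι → ℤ, IsPDMOn (Iset (2 * (2 * r + 1) + 1) \ U) E) :
    ∃ D : Fin n → Fin k → ℤ, IsPDMOn (Iset ((2 * r + 1) * (2 * t + 1 + 1) + 1) \ U) D := by
  obtain ⟨G, hG⟩ := hG
  obtain ⟨A, hA⟩ := hA
  obtain ⟨E, hE⟩ := hE
  rw [show (2 * r + 1) * (2 * t + 1 + 1) + 1 = 2 * ((2 * r + 1) * (t + 1)) + 1 by ring]
  rw [Iset_two_mul_add_one] at hG hA hE ⊢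
  push_cast at hE ⊢
  have hcard : Fintype.card (Fin (2 * t + 1 - 1) × Fin (2 * r + 1) ⊕ ι) = k := by
    simp only [Fintype.card_sum, Fintype.card_prod, Fintype.card_fin, Nat.add_sub_cancel, ← hk]
  exact ⟨_, (hA.inflate (by positivity) hU hG hE).comp_equiv (Fintype.equivFinOfCardEq hcard).symm⟩

theorem PDMexists_mul_add_one {n m1 m2 : ℕ} (hm1 : Odd m1) (hm2 : Odd m2)
    (h1 : PDMexists n m1) (h2 : PDMexists n (2 * m1 + 1)) (h3 : SIPDMexists n m2) :
    PDMexists n (m1 * (m2 + 1) + 1) := by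
  obtain ⟨r, rfl⟩ := hm1
  obtain ⟨t, rfl⟩ := hm2
  obtain ⟨E, hE⟩ := h2
  refine (exists_IsPDMOn_Iset_inflate (empty_subset _) ?_ h1 h3 ⟨E, by rwa [sdiff_empty]⟩).imp
    fun D hD => by rwa [sdiff_empty] at hD
  simp only [Fintype.card_fin]
  ring

theorem SIPDMexists_mul_add_one {n m1 m2 : ℕ} (hm1 : Odd m1) (hm2 : Odd m2)
    (h1 : PDMexists n m1) (h2 : SIPDMexists n (2 * m1 + 1)) (h3 : SIPDMexists n m2) :
    SIPDMexists n (m1 * (m2 + 1) + 1) := by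
  obtain ⟨r, rfl⟩ := hm1
  obtain ⟨t, rfl⟩ := hm2
  exact exists_IsPDMOn_Iset_inflate subset_rfl
    (by simp only [Fintype.card_fin, Nat.add_sub_cancel]; ring) h1 h3 h2

theorem stmt6_general (m1 m2 : ℕ) (hm1 : Odd m1)
    (hm2 : Odd m2)
    (h1 : PDMexists 3 m1) (h2 : PDMexists 3 (2 * m1 + 1)) (h3 : SIPDMexists 3 m2) :
    PDMexists 3 (m1 * (m2 + 1) + 1) ∧
    (SIPDMexists 3 (2 * m1 + 1) → SIPDMexists 3 (m1 * (m2 + 1) + 1)) :=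
  ⟨PDMexists_mul_add_one hm1 hm2 h1 h2 h3, fun h4 => SIPDMexists_mul_add_one hm1 hm2 h1 h4 h3⟩

/-- Theorem 2.7.  If there exist a `PDM(3,m1)`, a `PDM(3,2m1+1)`
and an `SIPDM(3,m2,1)`, then there exists a `PDM(3, m1(m2+1)+1)`; if moreover an
`SIPDM(3,2m1+1,1)` exists, then an `SIPDM(3, m1(m2+1)+1, 1)` exists. -/
theorem stmt6 (m1 m2 : ℕ) (hm1 : Odd m1) (hm1pos : 0 < m1)
    (hm2 : Odd m2) (hm2pos : 0 < m2)
    (h1 : PDMexists 3 m1) (h2 : PDMexists 3 (2 * m1 + 1)) (h3 : SIPDMexists 3 m2) :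
    PDMexists 3 (m1 * (m2 + 1) + 1) ∧
    (SIPDMexists 3 (2 * m1 + 1) → SIPDMexists 3 (m1 * (m2 + 1) + 1)) :=
  stmt6_general m1 m2 hm1 hm2 h1 h2 h3
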